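/- arXiv:1904.04720 — 2 statements merged into one kernel-verified Lean document; each statement's English description precedes it below -/
import Mathlib

section
/- Let (p_1,...,p_n) be a probability distribution with p_1 ≤ p_2 ≤ ... ≤ p_n, let δ be its total variation distance from the uniform distribution on [n], and let I be a random index distributed according to (p_1,...,p_n). Let J be a random index such that conditioned on I = ℓ, J is uniform on [n]\{ℓ}. Then Pr(I < J) ≤ 1/2 − δ/2. -/
/-!
For monotone `p` (indices from `0`), `∑ ℓ, p ℓ * (2ℓ - (n - 1))` is half of `∑ i, ∑ j, |p i - p j|`,
because `ℓ` lies above exactly `ℓ` indices and below `n - 1 - ℓ`. By the triangle inequality,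
`∑ j, |p i - p j| ≥ |n * p i - 1| = n * |p i - 1/n|`, so this weighted sum is at least `n * δ`.
Since `Pr(I < J) = 1/2 - (∑ ℓ, p ℓ * (2ℓ - (n - 1))) / (2(n - 1))`, this gives
`Pr(I < J) ≤ 1/2 - n * δ / (2(n - 1)) ≤ 1/2 - δ/2`.
-/

open Finset

theorem sum_sum_abs_sub_eq_of_monotone {ι : Type*} [Fintype ι] [LinearOrder ι]
    [LocallyFiniteOrderBot ι] [LocallyFiniteOrderTop ι] {p : ι → ℝ} (hp : Monotone p) :
    ∑ i, ∑ j, |p i - p j| = 2 * ∑ ℓ, p ℓ * ((#(Iio ℓ) : ℝ) - #(Ioi ℓ)) := by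
  have hsplit : ∀ i j, |p i - p j|
      = (if j < i then p i - p j else 0) + (if i < j then p j - p i else 0) := by
    intro i j
    rcases lt_trichotomy i j with h | rfl | h
    · simp [h, h.not_gt, abs_of_nonpos (sub_nonpos.2 (hp h.le))]
    · simp
    · simp [h, h.not_gt, abs_of_nonneg (sub_nonneg.2 (hp h.le))]
  have hcount : ∀ ℓ, ∑ j, (if j < ℓ then p ℓ - p j else 0)
      = p ℓ * #(Iio ℓ) - ∑ j ∈ Iio ℓ, p j := by
    intro ℓ
    rw [← sum_filter, filter_gt_eq_Iio, sum_sub_distrib, sum_const, nsmul_eq_mul, mul_comm]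
  have hswap : ∑ ℓ, ∑ j ∈ Iio ℓ, p j = ∑ j, p j * #(Ioi j) := by
    simp only [← filter_gt_eq_Iio, ← filter_lt_eq_Ioi, sum_filter]
    rw [sum_comm]
    simp [← sum_filter, mul_comm]
  simp only [hsplit, sum_add_distrib]
  rw [sum_comm (f := fun i j => if i < j then p j - p i else 0)]
  simp only [hcount, sum_sub_distrib, hswap, mul_sub]
  ring

theorem card_mul_sum_abs_sub_mean_le {ι : Type*} [Fintype ι] (p : ι → ℝ) :
    Fintype.card ι * ∑ i, |p i - (∑ j, p j) / Fintype.card ι| ≤ ∑ i, ∑ j, |p i - p j| := by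
  rw [mul_sum]
  refine sum_le_sum fun i _ => ?_
  have hcard : (Fintype.card ι : ℝ) ≠ 0 := by
    have := Fintype.card_pos_iff.2 ⟨i⟩
    positivity
  have hdev : ∑ j, (p i - p j) = Fintype.card ι * (p i - (∑ j, p j) / Fintype.card ι) := by
    rw [sum_sub_distrib, sum_const, card_univ, nsmul_eq_mul, mul_sub, mul_div_cancel₀ _ hcard]
  calc (Fintype.card ι : ℝ) * |p i - (∑ j, p j) / Fintype.card ι|
      = |∑ j, (p i - p j)| := by rw [hdev, abs_mul, Nat.abs_cast]
    _ ≤ ∑ j, |p i - p j| := abs_sum_le_sum_abs _ _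

theorem pr_lt_le_half_sub_general {n : ℕ} (hn : 2 ≤ n) (p : Fin n → ℝ)
    (h1 : ∑ ℓ, p ℓ = 1) (hmono : Monotone p)
    (δ : ℝ) (hδ : δ = (1/2) * ∑ ℓ, |p ℓ - 1 / (n : ℝ)|) :
    ∑ ℓ : Fin n, p ℓ * (((n : ℝ) - 1 - (ℓ.val : ℝ)) / ((n : ℝ) - 1)) ≤ 1/2 - δ/2 := by
  set A := ∑ ℓ : Fin n, p ℓ * (2 * (ℓ : ℝ) - (n - 1))
  have hn1 : (1 : ℝ) ≤ n - 1 := by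
    have : (2 : ℝ) ≤ n := by exact_mod_cast hn
    linarith
  have hweight : ∀ ℓ : Fin n, (#(Iio ℓ) : ℝ) - #(Ioi ℓ) = 2 * ℓ - (n - 1) := by
    intro ℓ
    rw [Fin.card_Iio, Fin.card_Ioi, Nat.cast_sub (by omega), Nat.cast_sub (by omega)]
    ring
  have hA : n * δ ≤ A := by
    have := card_mul_sum_abs_sub_mean_le p
    rw [sum_sum_abs_sub_eq_of_monotone hmono, h1, Fintype.card_fin] at this
    simp only [hweight] at this
    rw [hδ]
    linarith
  have hLHS : ∑ ℓ : Fin n, p ℓ * (((n : ℝ) - 1 - (ℓ.val : ℝ)) / ((n : ℝ) - 1))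
      = 1/2 - A / (2 * (n - 1)) := by
    calc _ = ∑ ℓ : Fin n, (p ℓ / 2 - p ℓ * (2 * (ℓ : ℝ) - (n - 1)) / (2 * (n - 1))) :=
          sum_congr rfl fun ℓ _ => by field_simp; ring
      _ = _ := by rw [sum_sub_distrib, ← sum_div, ← sum_div, h1]
  have hδ0 : 0 ≤ δ := by rw [hδ]; positivity
  calc _ = 1/2 - A / (2 * (n - 1)) := hLHS
    _ ≤ 1/2 - n * δ / (2 * (n - 1)) := by gcongr
    _ ≤ 1/2 - δ/2 := by
      rw [sub_le_sub_iff_left, div_le_div_iff₀ (by norm_num) (by linarith)]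
      nlinarith

/-- Claim 3.2 of the paper: for a monotone nondecreasing probability vector `p`
on `[n]` at total variation distance `δ` from uniform, with `I ∼ p` and `J`
uniform on `[n] \ {I}`, we have `Pr(I < J) = ∑_ℓ p_ℓ·(n−ℓ)/(n−1) ≤ 1/2 − δ/2`. -/
theorem pr_lt_le_half_sub {n : ℕ} (hn : 2 ≤ n) (p : Fin n → ℝ)
    (h0 : ∀ ℓ, 0 ≤ p ℓ) (h1 : ∑ ℓ, p ℓ = 1) (hmono : Monotone p)
    (δ : ℝ) (hδ : δ = (1/2) * ∑ ℓ, |p ℓ - 1 / (n : ℝ)|) :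
    ∑ ℓ : Fin n, p ℓ * (((n : ℝ) - 1 - (ℓ.val : ℝ)) / ((n : ℝ) - 1)) ≤ 1/2 - δ/2 :=
  pr_lt_le_half_sub_general hn p h1 hmono δ hδ
end

section
/- Let n ≥ 2, and let p : Fin n → ℝ be a monotone nondecreasing probability distribution with total variation distance δ from the uniform distribution on [n]. Then ∑_{ℓ=1}^n p_ℓ · (n−ℓ)/(n−1) = 1/2 − n·δ/(2n−2). -/
open Finset

lemma aux_card_mul_le_sum {s : Finset ℕ} {f : ℕ → ℝ} {c : ℝ}
    (h : ∀ i ∈ s, c ≤ f i) : (s.card : ℝ) * c ≤ ∑ i ∈ s, f i := by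
  simpa [nsmul_eq_mul] using Finset.card_nsmul_le_sum s f c h

lemma aux_sum_le_card_mul {s : Finset ℕ} {f : ℕ → ℝ} {c : ℝ}
    (h : ∀ i ∈ s, f i ≤ c) : ∑ i ∈ s, f i ≤ (s.card : ℝ) * c := by
  simpa [nsmul_eq_mul] using Finset.sum_le_card_nsmul s f c h

lemma aux_gauss (m : ℕ) : ∑ i ∈ range m, (i : ℝ) = (m : ℝ) * ((m : ℝ) - 1) / 2 := by
  induction m with
  | zero => simp
  | succ m ih => rw [Finset.sum_range_succ, ih]; push_cast; ring

lemma aux_gauss_Ico (a b : ℕ) (hab : a ≤ b) :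
    ∑ i ∈ Ico a b, (i : ℝ) = (b : ℝ) * ((b : ℝ) - 1) / 2 - (a : ℝ) * ((a : ℝ) - 1) / 2 := by
  have h := Finset.sum_Ico_consecutive (fun i => (i : ℝ)) (Nat.zero_le a) hab
  have h0 : ∑ i ∈ Ico 0 a, (i:ℝ) = (a : ℝ) * ((a : ℝ) - 1) / 2 := by
    rw [← Finset.range_eq_Ico]; exact aux_gauss a
  have h1 : ∑ i ∈ Ico 0 b, (i:ℝ) = (b : ℝ) * ((b : ℝ) - 1) / 2 := by
    rw [← Finset.range_eq_Ico]; exact aux_gauss b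
  linarith [h, h0, h1]

/-- For a monotone nondecreasing probability vector `p` on `[n]` at total
variation distance `δ` from uniform, `∑_ℓ p_ℓ·(n−ℓ)/(n−1) ≤ 1/2 − n·δ/(2n−2)`. -/
theorem sum_weighted_le {n : ℕ} (hn : 2 ≤ n) (p : Fin n → ℝ)
    (h0 : ∀ ℓ, 0 ≤ p ℓ) (h1 : ∑ ℓ, p ℓ = 1) (hmono : Monotone p)
    (δ : ℝ) (hδ : δ = (1/2) * ∑ ℓ, |p ℓ - 1 / (n : ℝ)|) :
    ∑ ℓ : Fin n, p ℓ * (((n : ℝ) - 1 - (ℓ.val : ℝ)) / ((n : ℝ) - 1))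
      ≤ 1/2 - (n : ℝ) * δ / (2 * (n : ℝ) - 2) := by
  have hn0 : (0:ℝ) < n := by positivity
  have hn1 : (1:ℝ) < (n:ℝ) := by exact_mod_cast hn.trans_lt' one_lt_two
  have hn1' : (0:ℝ) < (n:ℝ) - 1 := by linarith
  -- the centered, extended sequence
  set ee : ℕ → ℝ := fun i => p ⟨min i (n-1), by omega⟩ - 1/(n:ℝ) with hee_def
  have hee_mono : Monotone ee := by
    intro a b hab
    have : (⟨min a (n-1), by omega⟩ : Fin n) ≤ ⟨min b (n-1), by omega⟩ := by
      simp [Fin.mk_le_mk]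
      omega
    exact sub_le_sub_right (hmono this) _
  have hee_eq : ∀ ℓ : Fin n, ee ℓ.val = p ℓ - 1/(n:ℝ) := by
    intro ℓ
    have hlt := ℓ.isLt
    have hfix : (⟨min ℓ.val (n-1), by omega⟩ : Fin n) = ℓ := by
      apply Fin.ext
      show min ℓ.val (n-1) = ℓ.val
      omega
    simp only [hee_def, hfix]
  have hfin : ∀ f : ℕ → ℝ, ∑ ℓ : Fin n, f ℓ.val = ∑ i ∈ range n, f i := by
    intro f; exact Fin.sum_univ_eq_sum_range f n
  have huni : ∑ ℓ : Fin n, (1/(n:ℝ)) = 1 := by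
    rw [Finset.sum_const, Finset.card_univ, Fintype.card_fin, nsmul_eq_mul]
    field_simp
  have hsum0 : ∑ i ∈ range n, ee i = 0 := by
    rw [← hfin ee]
    calc ∑ ℓ : Fin n, ee ℓ.val = ∑ ℓ : Fin n, (p ℓ - 1/(n:ℝ)) := by
          exact Finset.sum_congr rfl fun ℓ _ => hee_eq ℓ
      _ = 0 := by rw [Finset.sum_sub_distrib, h1, huni]; ring
  have hδ' : δ = (1/2) * ∑ i ∈ range n, |ee i| := by
    rw [hδ, ← hfin (fun i => |ee i|)]
    congr 1
    exact Finset.sum_congr rfl fun ℓ _ => by rw [hee_eq ℓ]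
  set T : ℝ := ∑ i ∈ range n, (i:ℝ) * ee i with hT_def
  -- main inequality: n * ∑ |ee| ≤ 4 T
  have key : (n:ℝ) * ∑ i ∈ range n, |ee i| ≤ 4 * T := by
    by_cases h0e : 0 ≤ ee 0
    · have hz : ∀ i ∈ range n, ee i = 0 := by
        rw [← Finset.sum_eq_zero_iff_of_nonneg (fun i _ => (h0e.trans (hee_mono (Nat.zero_le i))))]
        exact hsum0
      have habs0 : ∑ i ∈ range n, |ee i| = 0 :=
        Finset.sum_eq_zero fun i hi => by rw [hz i hi]; simp
      have hT0 : T = 0 := Finset.sum_eq_zero fun i hi => by rw [hz i hi]; ring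
      rw [habs0, hT0]; norm_num
    · push_neg at h0e
      have hlast : 0 ≤ ee (n-1) := by
        by_contra hc
        push_neg at hc
        have hle : ∑ i ∈ range n, ee i ≤ (n:ℝ) * ee (n-1) := by
          have := aux_sum_le_card_mul (s := range n) (f := ee) (c := ee (n-1))
            (fun i hi => hee_mono (by simp at hi; omega))
          simpa using this
        nlinarith
      have hexk : ∃ j, 0 ≤ ee j := ⟨n-1, hlast⟩
      set k := Nat.find hexk with hk_def
      have hk0 : 0 ≤ ee k := Nat.find_spec hexk
      have hkneg : ∀ j < k, ee j < 0 := fun j hj => by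
        have := Nat.find_min hexk hj; push_neg at this; exact this
      have hk_le : k ≤ n - 1 := Nat.find_min' hexk hlast
      have hkn : k < n := by omega
      have hk1 : 1 ≤ k := by
        rcases Nat.eq_zero_or_pos k with h | h
        · exfalso; rw [h] at hk0; linarith
        · exact h
      set E : ℕ → ℝ := fun j => ∑ i ∈ Ico j n, ee i with hE_def
      have hsplit0 : ∑ i ∈ Ico 0 k, ee i + E k = 0 := by
        rw [hE_def]
        simp only
        rw [Finset.sum_Ico_consecutive ee (Nat.zero_le k) hkn.le]
        rw [← Finset.range_eq_Ico]; exact hsum0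
      have habs : ∑ i ∈ range n, |ee i| = 2 * E k := by
        rw [Finset.range_eq_Ico,
          ← Finset.sum_Ico_consecutive (fun i => |ee i|) (Nat.zero_le k) hkn.le]
        have e1 : ∑ i ∈ Ico 0 k, |ee i| = -∑ i ∈ Ico 0 k, ee i := by
          rw [← Finset.sum_neg_distrib]
          exact Finset.sum_congr rfl fun i hi => abs_of_neg (hkneg i (by simp at hi; omega))
        have e2 : ∑ i ∈ Ico k n, |ee i| = E k :=
          Finset.sum_congr rfl fun i hi =>
            abs_of_nonneg (hk0.trans (hee_mono (by simp at hi; omega)))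
        rw [e1, e2]
        linarith [hsplit0]
      have hTE : T = ∑ j ∈ Ico 1 n, E j := by
        have step : ∑ j ∈ Ico 1 n, E j = ∑ i ∈ Ico 1 n, (i:ℝ) * ee i := by
          rw [hE_def]
          simp only
          have comm := Finset.sum_Ico_Ico_comm 1 n (fun _ i => ee i)
          rw [comm]
          apply Finset.sum_congr rfl
          intro i hi
          rw [Finset.sum_const, Nat.card_Ico, nsmul_eq_mul]
          simp
        rw [step, hT_def, Finset.range_eq_Ico,
          ← Finset.sum_Ico_consecutive (fun i => (i:ℝ) * ee i) (Nat.zero_le 1)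
            (by omega : 1 ≤ n)]
        simp
      have fleft : ∀ j ∈ Ico 1 (k+1), (j:ℝ) * E k ≤ (k:ℝ) * E j := by
        intro j hj
        simp only [Finset.mem_Ico] at hj
        obtain ⟨hj1, hjk'⟩ := hj
        have hjk : j ≤ k := by omega
        have hA : ∑ i ∈ Ico 0 j, ee i ≤ (j:ℝ) * ee j := by
          have := aux_sum_le_card_mul (s := Ico 0 j) (f := ee) (c := ee j)
            (fun i hi => hee_mono (by simp at hi; omega))
          simpa using this
        have hB : ((k:ℝ) - (j:ℝ)) * ee j ≤ ∑ i ∈ Ico j k, ee i := by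
          have := aux_card_mul_le_sum (s := Ico j k) (f := ee) (c := ee j)
            (fun i hi => hee_mono (by simp at hi; omega))
          rw [Nat.card_Ico] at this
          rwa [Nat.cast_sub hjk] at this
        have hEj : E j = ∑ i ∈ Ico j k, ee i + E k := by
          rw [hE_def]
          simp only
          rw [Finset.sum_Ico_consecutive ee hjk hkn.le]
        have hAB : ∑ i ∈ Ico 0 j, ee i + ∑ i ∈ Ico j k, ee i + E k = 0 := by
          have := Finset.sum_Ico_consecutive ee (Nat.zero_le j) hjk
          linarith [hsplit0, this]
        have hj0 : (0:ℝ) ≤ (j:ℝ) := by positivity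
        have hjkR : (j:ℝ) ≤ (k:ℝ) := by exact_mod_cast hjk
        have hEkv : E k = -(∑ i ∈ Ico 0 j, ee i) - ∑ i ∈ Ico j k, ee i := by
          linarith [hAB]
        have h5 : (j:ℝ) * ((((k:ℝ) - (j:ℝ))) * ee j) ≤ (j:ℝ) * ∑ i ∈ Ico j k, ee i :=
          mul_le_mul_of_nonneg_left hB hj0
        have h6 : ((k:ℝ) - (j:ℝ)) * ∑ i ∈ Ico 0 j, ee i
            ≤ ((k:ℝ) - (j:ℝ)) * ((j:ℝ) * ee j) :=
          mul_le_mul_of_nonneg_left hA (by linarith)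
        have h8 : (j:ℝ) * ((((k:ℝ) - (j:ℝ))) * ee j)
            = ((k:ℝ) - (j:ℝ)) * ((j:ℝ) * ee j) := by ring
        have h9 : (k:ℝ) * E j - (j:ℝ) * E k
            = (j:ℝ) * ∑ i ∈ Ico j k, ee i
              - ((k:ℝ) - (j:ℝ)) * ∑ i ∈ Ico 0 j, ee i := by
          rw [hEj, hEkv]; ring
        linarith [h5, h6, h8, h9]
      have fright : ∀ j ∈ Ico (k+1) n, ((n:ℝ) - (j:ℝ)) * E k ≤ ((n:ℝ) - (k:ℝ)) * E j := by
        intro j hj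
        simp only [Finset.mem_Ico] at hj
        obtain ⟨hjk', hjn⟩ := hj
        have hkj : k ≤ j := by omega
        have hB : ∑ i ∈ Ico k j, ee i ≤ ((j:ℝ) - (k:ℝ)) * ee j := by
          have := aux_sum_le_card_mul (s := Ico k j) (f := ee) (c := ee j)
            (fun i hi => hee_mono (by simp at hi; omega))
          rw [Nat.card_Ico] at this
          rwa [Nat.cast_sub hkj] at this
        have hC : ((n:ℝ) - (j:ℝ)) * ee j ≤ E j := by
          have := aux_card_mul_le_sum (s := Ico j n) (f := ee) (c := ee j)
            (fun i hi => hee_mono (by simp at hi; omega))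
          rw [Nat.card_Ico, Nat.cast_sub hjn.le] at this
          exact this
        have hEk : E k = ∑ i ∈ Ico k j, ee i + E j := by
          rw [hE_def]
          simp only
          rw [Finset.sum_Ico_consecutive ee hkj hjn.le]
        have hjR : (j:ℝ) ≤ (n:ℝ) := by exact_mod_cast hjn.le
        have hkjR : (k:ℝ) ≤ (j:ℝ) := by exact_mod_cast hkj
        have h5 : ((j:ℝ) - (k:ℝ)) * (((n:ℝ) - (j:ℝ)) * ee j) ≤ ((j:ℝ) - (k:ℝ)) * E j :=
          mul_le_mul_of_nonneg_left hC (by linarith)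
        have h6 : ((n:ℝ) - (j:ℝ)) * ∑ i ∈ Ico k j, ee i
            ≤ ((n:ℝ) - (j:ℝ)) * (((j:ℝ) - (k:ℝ)) * ee j) :=
          mul_le_mul_of_nonneg_left hB (by linarith)
        have h8 : ((j:ℝ) - (k:ℝ)) * (((n:ℝ) - (j:ℝ)) * ee j)
            = ((n:ℝ) - (j:ℝ)) * (((j:ℝ) - (k:ℝ)) * ee j) := by ring
        have h9 : ((n:ℝ) - (k:ℝ)) * E j - ((n:ℝ) - (j:ℝ)) * E k
            = ((j:ℝ) - (k:ℝ)) * E j - ((n:ℝ) - (j:ℝ)) * ∑ i ∈ Ico k j, ee i := by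
          rw [hEk]; ring
        linarith [h5, h6, h8, h9]
      -- assemble
      set X : ℝ := ∑ j ∈ Ico 1 (k+1), E j with hX_def
      set Y : ℝ := ∑ j ∈ Ico (k+1) n, E j with hY_def
      have hsplitT : T = X + Y := by
        rw [hTE, ← Finset.sum_Ico_consecutive E (by omega : 1 ≤ k+1) (by omega : k+1 ≤ n)]
      have hkR : (0:ℝ) < (k:ℝ) := by exact_mod_cast hk1
      have hknR : (k:ℝ) < (n:ℝ) := by exact_mod_cast hkn
      have h1' : ∑ j ∈ Ico 1 (k+1), ((j:ℝ) * E k) ≤ ∑ j ∈ Ico 1 (k+1), ((k:ℝ) * E j) :=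
        Finset.sum_le_sum fleft
      rw [← Finset.sum_mul, ← Finset.mul_sum, aux_gauss_Ico 1 (k+1) (by omega)] at h1'
      push_cast at h1'
      have hX2 : ((k:ℝ) + 1) * E k ≤ 2 * X := by
        have hgoal : (k:ℝ) * (((k:ℝ) + 1) * E k) ≤ (k:ℝ) * (2 * X) := by linarith [h1']
        exact le_of_mul_le_mul_left hgoal hkR
      have h2' : ∑ j ∈ Ico (k+1) n, (((n:ℝ) - (j:ℝ)) * E k)
          ≤ ∑ j ∈ Ico (k+1) n, (((n:ℝ) - (k:ℝ)) * E j) :=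
        Finset.sum_le_sum fright
      have hcoef : ∑ j ∈ Ico (k+1) n, ((n:ℝ) - (j:ℝ))
          = ((n:ℝ) - (k:ℝ)) * ((n:ℝ) - (k:ℝ) - 1) / 2 := by
        rw [Finset.sum_sub_distrib, Finset.sum_const, Nat.card_Ico, nsmul_eq_mul,
          aux_gauss_Ico (k+1) n (by omega)]
        rw [Nat.cast_sub (by omega : k+1 ≤ n)]
        push_cast
        ring
      rw [← Finset.sum_mul, ← Finset.mul_sum, hcoef] at h2'
      have hY2 : ((n:ℝ) - (k:ℝ) - 1) * E k ≤ 2 * Y := by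
        have hgoal : ((n:ℝ) - (k:ℝ)) * (((n:ℝ) - (k:ℝ) - 1) * E k)
            ≤ ((n:ℝ) - (k:ℝ)) * (2 * Y) := by linarith [h2']
        exact le_of_mul_le_mul_left hgoal (by linarith)
      rw [habs]
      linarith [hX2, hY2, hsplitT]
  -- final algebra
  have hS : ∑ ℓ : Fin n, (ℓ.val:ℝ) * p ℓ = T + ((n:ℝ) - 1)/2 := by
    have e1 : ∑ ℓ : Fin n, (ℓ.val:ℝ) * p ℓ = ∑ i ∈ range n, (i:ℝ) * (ee i + 1/(n:ℝ)) := by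
      rw [← hfin (fun i => (i:ℝ) * (ee i + 1/(n:ℝ)))]
      exact Finset.sum_congr rfl fun ℓ _ => by rw [hee_eq ℓ]; ring
    rw [e1]
    have e2 : ∀ i ∈ range n, (i:ℝ) * (ee i + 1/(n:ℝ)) = (i:ℝ)*ee i + (i:ℝ)*(1/(n:ℝ)) :=
      fun i _ => by ring
    rw [Finset.sum_congr rfl e2, Finset.sum_add_distrib, ← Finset.sum_mul, aux_gauss n]
    rw [← hT_def]
    field_simp
  have hLHS : ∑ ℓ : Fin n, p ℓ * (((n:ℝ) - 1 - (ℓ.val:ℝ))/((n:ℝ) - 1))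
      = (((n:ℝ) - 1)/2 - T)/((n:ℝ) - 1) := by
    have e3 : ∀ ℓ ∈ (univ : Finset (Fin n)), p ℓ * (((n:ℝ) - 1 - (ℓ.val:ℝ))/((n:ℝ) - 1))
        = (p ℓ * ((n:ℝ) - 1) - (ℓ.val:ℝ) * p ℓ)/((n:ℝ) - 1) := by
      intro ℓ _
      field_simp
    rw [Finset.sum_congr rfl e3, ← Finset.sum_div]
    congr 1
    rw [Finset.sum_sub_distrib, ← Finset.sum_mul, h1, hS]
    ring
  rw [hLHS, div_le_iff₀ hn1']
  have hδ2 : (n:ℝ) * δ ≤ 2 * T := by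
    rw [hδ']
    linarith [key]
  have hne : (2*(n:ℝ) - 2) ≠ 0 := by linarith
  have erhs : (1/2 - (n:ℝ)*δ/(2*(n:ℝ) - 2)) * ((n:ℝ) - 1)
      = ((n:ℝ) - 1)/2 - (n:ℝ)*δ/2 := by
    field_simp
  rw [erhs]
  linarith
end
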